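/- arXiv:1004.1865 — 3 statements merged into one kernel-verified Lean document; each statement's English description precedes it below -/
import Mathlib

section
/- For every real t > 0, every integer k ≥ 0, and every real y with 0 ≤ y < t, one has cosh((2k+1)t) − cosh(y) ≥ (1/2)·e^{(2k+1)t}·(1 − e^{y−t})². -/
/-!
Factor `cosh a - cosh y = ½ eᵃ (1 - e^{-(a+y)}) (1 - e^{y-a})` (the product formula
`cosh a - cosh y = 2 sinh((a+y)/2) sinh((a-y)/2)` with `sinh(u/2) = ½ e^{u/2} (1 - e^{-u})`).
For `a ≥ t ≥ y ≥ 0` both factors in parentheses are at least `1 - e^{y-t} ≥ 0`.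
-/

namespace Real

theorem cosh_sub_cosh_eq_exp_mul (a y : ℝ) :
    cosh a - cosh y = exp a * (1 - exp (-(a + y))) * (1 - exp (y - a)) / 2 := by
  simp only [cosh_eq, exp_neg, exp_add, exp_sub]
  field_simp
  ring

theorem exp_mul_one_sub_exp_sub_sq_le_cosh_sub_cosh {a y t : ℝ} (hta : t ≤ a) (hy : 0 ≤ y)
    (hyt : y ≤ t) : 1 / 2 * exp a * (1 - exp (y - t)) ^ 2 ≤ cosh a - cosh y := by
  have h_nonneg : 0 ≤ 1 - exp (y - t) := sub_nonneg.2 (exp_le_one_iff.2 (by linarith))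
  have h_sum : 1 - exp (y - t) ≤ 1 - exp (-(a + y)) := by gcongr; linarith
  have h_diff : 1 - exp (y - t) ≤ 1 - exp (y - a) := by gcongr
  calc 1 / 2 * exp a * (1 - exp (y - t)) ^ 2
      = exp a * ((1 - exp (y - t)) * (1 - exp (y - t))) / 2 := by ring
    _ ≤ exp a * ((1 - exp (-(a + y))) * (1 - exp (y - a))) / 2 := by
      gcongr exp a * ?_ / 2
      exact mul_le_mul h_sum h_diff h_nonneg (h_nonneg.trans h_sum)
    _ = cosh a - cosh y := by rw [cosh_sub_cosh_eq_exp_mul, mul_assoc]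

end Real

theorem whole_plane_sle_cosh_lower_bound_general (t : ℝ) (k : ℕ) (y : ℝ)
    (hy0 : 0 ≤ y) (hyt : y < t) :
    Real.cosh ((2 * (k : ℝ) + 1) * t) - Real.cosh y ≥
      (1 / 2) * Real.exp ((2 * (k : ℝ) + 1) * t) * (1 - Real.exp (y - t)) ^ 2 := by
  have h_le : t ≤ (2 * (k : ℝ) + 1) * t := by
    nlinarith [(Nat.cast_nonneg k : (0 : ℝ) ≤ k)]
  exact Real.exp_mul_one_sub_exp_sub_sq_le_cosh_sub_cosh h_le hy0 hyt.le

theorem whole_plane_sle_cosh_lower_bound (t : ℝ) (ht : 0 < t) (k : ℕ) (y : ℝ)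
    (hy0 : 0 ≤ y) (hyt : y < t) :
    Real.cosh ((2 * (k : ℝ) + 1) * t) - Real.cosh y ≥
      (1 / 2) * Real.exp ((2 * (k : ℝ) + 1) * t) * (1 - Real.exp (y - t)) ^ 2 :=
  whole_plane_sle_cosh_lower_bound_general t k y hy0 hyt
end

section
/- Let κ > 0, σ ≥ 0, and τ = κ/4 − √(κ²/16 + κσ). Define Ψ : (0,∞) × ℝ → ℝ by Ψ(t,x) = e^{−τ²t/(2κ)}·cosh(x/2)^{2τ/κ}. Then Ψ is smooth and satisfies −∂_t Ψ(t,x) = (κ/2)·∂_x² Ψ(t,x) + σ·(1/2)·cosh(x/2)^{−2}·Ψ(t,x) for all t > 0 and x ∈ ℝ. -/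
theorem psi_infty_solves_limit_pde (κ σ τ : ℝ) (hκ : 0 < κ) (hσ : 0 ≤ σ)
    (hτ : τ = κ / 4 - Real.sqrt (κ ^ 2 / 16 + κ * σ))
    (Ψ : ℝ → ℝ → ℝ)
    (hΨ : ∀ t x, Ψ t x =
      Real.exp (-(τ ^ 2 * t) / (2 * κ)) * Real.cosh (x / 2) ^ (2 * τ / κ)) :
    ContDiff ℝ (⊤ : ℕ∞) (fun p : ℝ × ℝ => Ψ p.1 p.2) ∧
      ∀ t x : ℝ, 0 < t →
        -deriv (fun s => Ψ s x) t =
          κ / 2 * deriv (deriv (Ψ t)) x +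
            σ * ((1 / 2) / Real.cosh (x / 2) ^ 2) * Ψ t x := by
  have hκ' : κ ≠ 0 := ne_of_gt hκ
  -- key algebraic identity : τ^2 = κ*τ/2 + κ*σ
  have hs : Real.sqrt (κ ^ 2 / 16 + κ * σ) = κ / 4 - τ := by rw [hτ]; ring
  have hsq : (κ / 4 - τ) ^ 2 = κ ^ 2 / 16 + κ * σ := by
    rw [← hs]; exact Real.sq_sqrt (by positivity)
  have key : τ ^ 2 = κ * τ / 2 + κ * σ := by nlinarith [hsq]
  set a : ℝ := 2 * τ / κ with ha
  -- cosh positivity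
  have hcosh_pos : ∀ x : ℝ, 0 < Real.cosh x := Real.cosh_pos
  constructor
  · have hfun : (fun p : ℝ × ℝ => Ψ p.1 p.2) =
        fun p : ℝ × ℝ => Real.exp (-(τ ^ 2 * p.1) / (2 * κ)) *
          Real.cosh (p.2 / 2) ^ a := funext fun p => hΨ p.1 p.2
    rw [hfun]
    apply ContDiff.mul
    · have hexp_arg : ContDiff ℝ (⊤ : ℕ∞) (fun p : ℝ × ℝ => -(τ ^ 2 * p.1) / (2 * κ)) :=
        ((contDiff_const.mul contDiff_fst).neg).div_const _
      exact Real.contDiff_exp.comp hexp_arg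
    · rw [contDiff_iff_contDiffAt]
      intro p
      exact ContDiffAt.rpow_const_of_ne
        ((Real.contDiff_cosh.comp (contDiff_snd.div_const 2)).contDiffAt)
        (ne_of_gt (hcosh_pos _))
  · intro t x ht
    set c : ℝ := τ ^ 2 / (2 * κ) with hc
    -- time derivative
    have hdt : HasDerivAt (fun s => Ψ s x)
        (-c * (Real.exp (-(τ ^ 2 * t) / (2 * κ)) * Real.cosh (x / 2) ^ a)) t := by
      have h0 : HasDerivAt (fun s : ℝ => -(τ ^ 2) / (2 * κ) * s)
          (-(τ ^ 2) / (2 * κ)) t := by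
        simpa using (hasDerivAt_id t).const_mul (-(τ ^ 2) / (2 * κ))
      have h1 : HasDerivAt (fun s : ℝ => -(τ ^ 2 * s) / (2 * κ)) (-c) t := by
        refine HasDerivAt.congr_deriv (h0.congr_of_eventuallyEq ?_) (by rw [hc]; ring)
        filter_upwards with s using by ring
      have h2 := h1.exp
      have h3 := h2.mul_const (Real.cosh (x / 2) ^ a)
      refine HasDerivAt.congr_deriv (h3.congr_of_eventuallyEq ?_) (by ring)
      filter_upwards with s using hΨ s x
    -- first space derivative, as a function
    have hhalf : ∀ y : ℝ, HasDerivAt (fun z : ℝ => z / 2) (1 / 2 : ℝ) y := fun y => by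
      simpa using (hasDerivAt_id y).div_const 2
    have hch : ∀ y : ℝ, HasDerivAt (fun z => Real.cosh (z / 2))
        (Real.sinh (y / 2) * (1 / 2)) y := fun y => by
      simpa [Function.comp_def] using (Real.hasDerivAt_cosh (y / 2)).comp y (hhalf y)
    have hd1 : ∀ y : ℝ, HasDerivAt (Ψ t)
        (Real.exp (-(τ ^ 2 * t) / (2 * κ)) *
          (Real.sinh (y / 2) * (1 / 2) * a * Real.cosh (y / 2) ^ (a - 1))) y := by
      intro y
      have h1 := ((hch y).rpow_const (p := a) (Or.inl (ne_of_gt (hcosh_pos _)))).const_mul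
        (Real.exp (-(τ ^ 2 * t) / (2 * κ)))
      refine h1.congr_of_eventuallyEq ?_
      filter_upwards with z using (hΨ t z)
    have hderiv1 : deriv (Ψ t) = fun y =>
        Real.exp (-(τ ^ 2 * t) / (2 * κ)) *
          (Real.sinh (y / 2) * (1 / 2) * a * Real.cosh (y / 2) ^ (a - 1)) :=
      funext fun y => (hd1 y).deriv
    -- second space derivative at x
    have hsh : HasDerivAt (fun z => Real.sinh (z / 2))
        (Real.cosh (x / 2) * (1 / 2)) x := by
      simpa [Function.comp_def] using (Real.hasDerivAt_sinh (x / 2)).comp x (hhalf x)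
    have hd2 : HasDerivAt (deriv (Ψ t))
        (Real.exp (-(τ ^ 2 * t) / (2 * κ)) *
          ((Real.cosh (x / 2) * (1 / 2) * (1 / 2) * a) * Real.cosh (x / 2) ^ (a - 1) +
           (Real.sinh (x / 2) * (1 / 2) * a) *
             (Real.sinh (x / 2) * (1 / 2) * (a - 1) * Real.cosh (x / 2) ^ (a - 1 - 1)))) x := by
      rw [hderiv1]
      have hmul := (((hsh.const_mul ((1:ℝ) / 2 * a))).mul
        ((hch x).rpow_const (p := a - 1) (Or.inl (ne_of_gt (hcosh_pos _)))))
      have h2 := hmul.const_mul (Real.exp (-(τ ^ 2 * t) / (2 * κ)))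
      refine HasDerivAt.congr_deriv (h2.congr_of_eventuallyEq ?_) (by ring)
      filter_upwards with z using by simp only [Pi.mul_apply]; ring
    rw [hdt.deriv, hd2.deriv, hΨ t x]
    -- algebra
    set h := Real.cosh (x / 2) with hh
    set s := Real.sinh (x / 2) with hss
    have hhpos : 0 < h := hcosh_pos _
    have hpyth : h ^ 2 - s ^ 2 = 1 := Real.cosh_sq_sub_sinh_sq (x / 2)
    have e1 : h ^ (a - 1) = h ^ a / h := by
      rw [Real.rpow_sub hhpos, Real.rpow_one]
    have e2 : h ^ (a - 1 - 1) = h ^ a / h ^ 2 := by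
      rw [show a - 1 - 1 = a - 2 by ring, Real.rpow_sub hhpos,
        show (2:ℝ) = ((2:ℕ):ℝ) by norm_num, Real.rpow_natCast]
    rw [e1, e2, ha, hc]
    have hE : (0:ℝ) < Real.exp (-(τ ^ 2 * t) / (2 * κ)) := Real.exp_pos _
    set E := Real.exp (-(τ ^ 2 * t) / (2 * κ))
    set P := h ^ (2 * τ / κ)
    field_simp
    linear_combination (2 * P * (h ^ 2 - s ^ 2)) * key +
      (2 * κ * σ * P) * hpyth
end

section
/- Let H, G : (0,∞) × ℝ → ℝ be C¹ in t and C² in x, suppose 2·G'' = G'·G + 3·H'' and ∂_t G = 3·H'' + G'·G + H'·G + G'·H (where ' = ∂_x). Define F = −G/3. Then ∂_t F = (8/3)·F'' + (1/3)·H'' + H'·F + F'·H + F'·F. In particular, F solves the chordal-type annulus drift PDE ∂_t Λ = (κ/2)Λ'' + (3 − κ/2)H'' + ΛH' + HΛ' + ΛΛ' with κ = 16/3. -/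
/-- Differentiation commutes with `y ↦ -y / c` even where `f` is not differentiable, since `deriv`
is then `0` on both sides. -/
theorem deriv_neg_div_const {𝕜 : Type*} [NontriviallyNormedField 𝕜] (f : 𝕜 → 𝕜) (c : 𝕜) :
    deriv (fun y => -f y / c) = fun y => -deriv f y / c := by
  funext y
  rw [deriv_div_const, ← deriv.neg]
  rfl

theorem kappa_sixteen_thirds_drift_pde_general (H G : ℝ → ℝ → ℝ)
    (halg : ∀ t x : ℝ, 0 < t →
      2 * deriv (deriv (G t)) x = deriv (G t) x * G t x + 3 * deriv (deriv (H t)) x)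
    (hPDE : ∀ t x : ℝ, 0 < t →
      deriv (fun s => G s x) t =
        3 * deriv (deriv (H t)) x + deriv (G t) x * G t x + deriv (H t) x * G t x +
          deriv (G t) x * H t x) :
    ∀ t x : ℝ, 0 < t →
      deriv (fun s => -G s x / 3) t =
        8 / 3 * deriv (deriv (fun y => -G t y / 3)) x +
          1 / 3 * deriv (deriv (H t)) x +
          deriv (H t) x * (-G t x / 3) +
          deriv (fun y => -G t y / 3) x * H t x +
          deriv (fun y => -G t y / 3) x * (-G t x / 3) := by
  intro t x ht
  rw [deriv_neg_div_const (fun s => G s x), deriv_neg_div_const (G t),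
    deriv_neg_div_const (deriv (G t))]
  linear_combination (-1 / 3 : ℝ) * hPDE t x ht + (4 / 9 : ℝ) * halg t x ht

theorem kappa_sixteen_thirds_drift_pde (H G : ℝ → ℝ → ℝ)
    (hHx : ∀ t, ContDiff ℝ 2 (H t)) (hGx : ∀ t, ContDiff ℝ 2 (G t))
    (hGt : ∀ x, Differentiable ℝ fun t => G t x)
    (halg : ∀ t x : ℝ, 0 < t →
      2 * deriv (deriv (G t)) x = deriv (G t) x * G t x + 3 * deriv (deriv (H t)) x)
    (hPDE : ∀ t x : ℝ, 0 < t →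
      deriv (fun s => G s x) t =
        3 * deriv (deriv (H t)) x + deriv (G t) x * G t x + deriv (H t) x * G t x +
          deriv (G t) x * H t x) :
    ∀ t x : ℝ, 0 < t →
      deriv (fun s => -G s x / 3) t =
        8 / 3 * deriv (deriv (fun y => -G t y / 3)) x +
          1 / 3 * deriv (deriv (H t)) x +
          deriv (H t) x * (-G t x / 3) +
          deriv (fun y => -G t y / 3) x * H t x +
          deriv (fun y => -G t y / 3) x * (-G t x / 3) :=
  kappa_sixteen_thirds_drift_pde_general H G halg hPDE
end
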